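/- arXiv:1502.01578 — 2 statements merged into one kernel-verified Lean document; each statement's English description precedes it below -/
import Mathlib

section
/- Let $G$ be a finite cyclic group of order $n$ generated by $\sigma$, $p$ an odd prime with $p \nmid n$, and $M$ a free $\mathbb{Z}$-module of finite rank with a $G$-action such that there exists $m \in M$ with $[M : \mathbb{Z}[G]\cdot m] < \infty$. Then $M/pM$ is a cyclic $\mathbb{F}_p[G]$-module. -/
/-!
Let `T` be the action of `σ` on `M`. As `ℚ ⊗ M` is a cyclic `ℚ[T]`-module, the characteristic
polynomial of `T` equals its minimal polynomial over `ℚ`, which divides `Xⁿ - 1`; by Gauss's lemma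
`charpoly T ∣ Xⁿ - 1` in `ℤ[X]`. Hence the characteristic polynomial of `T` on `M/pM` divides
`Xⁿ - 1`, which is separable over `𝔽_p` because `p ∤ n`. A squarefree characteristic polynomial is
the minimal polynomial: a root of an irreducible factor `q` in `𝔽_p[X]/(q)` is an eigenvalue. Finally,
over the PID `𝔽_p[X]` some vector has the minimal polynomial as annihilator, and such a vector is
cyclic once the minimal polynomial has degree `dim M/pM`.
-/

open TensorProduct

/-- `M ⊗_ℤ R` is a cyclic `R[G]`-module. -/
def IsCyclicGroupRingModule (R : Type*) [CommRing R] (G : Type*) [Monoid G]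
    (M : Type*) [AddCommGroup M] [DistribMulAction G M] : Prop :=
  ∃ m : R ⊗[ℤ] M, Submodule.span R
    {x : R ⊗[ℤ] M | ∃ σ : G,
      x = LinearMap.baseChange R ((DistribMulAction.toAddMonoidHom M σ).toIntLinearMap) m} = ⊤


open Polynomial Module

theorem Squarefree.dvd_of_forall_prime_dvd {α : Type*} [CommMonoidWithZero α]
    [UniqueFactorizationMonoid α] {a b : α} (ha : Squarefree a)
    (h : ∀ p, Prime p → p ∣ a → p ∣ b) : a ∣ b := by
  induction a using UniqueFactorizationMonoid.induction_on_prime generalizing b with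
  | h₁ =>
    nontriviality α
    exact absurd ha not_squarefree_zero
  | h₂ u hu => exact hu.dvd
  | h₃ a p _ hp ih =>
    obtain ⟨c, rfl⟩ := h p hp (dvd_mul_right p a)
    have hpa : ¬ p ∣ a := fun hpa => hp.not_isUnit (ha p (mul_dvd_mul_left p hpa))
    refine mul_dvd_mul_left p (ih ha.of_mul_right fun q hq hqa => ?_)
    refine (hq.dvd_or_dvd (h q hq (dvd_mul_of_dvd_right hqa p))).resolve_left fun hqp => hpa ?_
    exact (hq.irreducible.associated_of_dvd hp.irreducible hqp).symm.dvd.trans hqa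

theorem Set.range_comp_pow_eq_range {G α : Type*} [Group G] [Finite G] {σ : G}
    (hσ : ∀ g, g ∈ Subgroup.zpowers σ) (F : G → α) :
    Set.range (fun k : ℕ => F (σ ^ k)) = Set.range F := by
  refine subset_antisymm (Set.range_comp_subset_range _ F) ?_
  rintro _ ⟨g, rfl⟩
  obtain ⟨k, rfl⟩ := mem_powers_iff_mem_zpowers.mpr (hσ g)
  exact ⟨k, rfl⟩

theorem Submodule.baseChange_eq_top_of_index_ne_zero {K M : Type*} [Field K] [CharZero K]
    [AddCommGroup M] (N : Submodule ℤ M) (hN : N.toAddSubgroup.index ≠ 0) :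
    N.baseChange K = ⊤ := by
  have hmem (y : M) : (1 : K) ⊗ₜ[ℤ] y ∈ N.baseChange K := by
    have h := N.tmul_mem_baseChange_of_mem (1 : K) (AddSubgroup.nsmul_index_mem N.toAddSubgroup y)
    rw [TensorProduct.tmul_smul, ← Nat.cast_smul_eq_nsmul K] at h
    exact (Submodule.smul_mem_iff _ (Nat.cast_ne_zero.mpr hN)).mp h
  rw [eq_top_iff]
  rintro x -
  induction x using TensorProduct.induction_on with
  | zero => exact zero_mem _
  | tmul a y => simpa [TensorProduct.smul_tmul'] using Submodule.smul_mem _ a (hmem y)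
  | add x y hx hy => exact add_mem hx hy

theorem LinearMap.aeval_baseChange_map {R A M : Type*} [CommRing R] [CommRing A] [Algebra R A]
    [AddCommGroup M] [Module R M] (f : Module.End R M) (g : R[X]) :
    aeval (f.baseChange A) (g.map (algebraMap R A)) = (aeval f g).baseChange A := by
  rw [aeval_map_algebraMap]
  exact aeval_algHom_apply (Module.End.baseChangeHom R A M) f g

namespace Module.End

variable {K V : Type*} [Field K] [AddCommGroup V] [Module K V]

theorem exists_forall_aeval_apply_eq_zero_iff [FiniteDimensional K V] (f : Module.End K V) :
    ∃ v : V, ∀ g : K[X], aeval f g v = 0 ↔ minpoly K f ∣ g := by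
  obtain ⟨v, hv⟩ := Module.exists_ker_toSpanSingleton_eq_annihilator K[X] (Module.AEval' f)
  rw [← span_minpoly_eq_annihilator] at hv
  refine ⟨(AEval'.of f).symm v, fun g => ?_⟩
  rw [← Ideal.mem_span_singleton, ← hv]
  rfl

theorem aeval_apply_mem_span_range_pow_apply (f : Module.End K V) (v : V) (g : K[X]) :
    aeval f g v ∈ Submodule.span K (Set.range fun k : ℕ => (f ^ k) v) := by
  rw [aeval_eq_sum_range, LinearMap.coe_sum, Finset.sum_apply]
  exact Submodule.sum_mem _ fun i _ => Submodule.smul_mem _ _ (Submodule.subset_span ⟨i, rfl⟩)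

variable [FiniteDimensional K V] (f : Module.End K V)

theorem span_range_pow_apply_eq_map_degreeLT (v : V) :
    Submodule.span K (Set.range fun k : ℕ => (f ^ k) v) =
      (degreeLT K (minpoly K f).natDegree).map
        ((LinearMap.applyₗ v).comp (aeval f).toLinearMap) := by
  have hμ : (minpoly K f).Monic := minpoly.monic (Algebra.IsIntegral.isIntegral f)
  refine le_antisymm (Submodule.span_le.mpr ?_) ?_
  · rintro _ ⟨k, rfl⟩
    refine ⟨X ^ k %ₘ minpoly K f, ?_, ?_⟩
    · rw [SetLike.mem_coe, mem_degreeLT, ← degree_eq_natDegree hμ.ne_zero]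
      exact degree_modByMonic_lt _ hμ
    · simp [modByMonic_eq_sub_mul_div]
  · rintro _ ⟨g, -, rfl⟩
    exact aeval_apply_mem_span_range_pow_apply f v g

theorem finrank_span_range_pow_apply_le (v : V) :
    finrank K (Submodule.span K (Set.range fun k : ℕ => (f ^ k) v)) ≤
      (minpoly K f).natDegree := by
  rw [span_range_pow_apply_eq_map_degreeLT]
  calc _ ≤ finrank K (degreeLT K (minpoly K f).natDegree) := Submodule.finrank_map_le _ _
    _ = _ := by simp [(degreeLTEquiv K _).finrank_eq]

theorem finrank_span_range_pow_apply_eq {v : V}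
    (hv : ∀ g : K[X], aeval f g v = 0 ↔ minpoly K f ∣ g) :
    finrank K (Submodule.span K (Set.range fun k : ℕ => (f ^ k) v)) =
      (minpoly K f).natDegree := by
  set d := (minpoly K f).natDegree
  have hinj : Function.Injective
      (((LinearMap.applyₗ v).comp (aeval f).toLinearMap).comp (degreeLT K d).subtype) := by
    rw [← LinearMap.ker_eq_bot, LinearMap.ker_eq_bot']
    rintro ⟨g, hg⟩ hgv
    rw [Submodule.mk_eq_zero]
    refine eq_zero_of_dvd_of_degree_lt ((hv g).mp hgv) ?_
    rwa [degree_eq_natDegree (minpoly.ne_zero (Algebra.IsIntegral.isIntegral f)),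
      ← mem_degreeLT]
  rw [span_range_pow_apply_eq_map_degreeLT, ← Submodule.range_subtype (degreeLT K d),
    ← LinearMap.range_comp, LinearMap.finrank_range_of_inj hinj]
  simp [(degreeLTEquiv K _).finrank_eq]

theorem finrank_le_natDegree_minpoly {v : V}
    (hv : Submodule.span K (Set.range fun k : ℕ => (f ^ k) v) = ⊤) :
    finrank K V ≤ (minpoly K f).natDegree := by
  rw [← finrank_top K V, ← hv]
  exact finrank_span_range_pow_apply_le f v

theorem exists_span_range_pow_apply_eq_top (h : finrank K V ≤ (minpoly K f).natDegree) :
    ∃ v : V, Submodule.span K (Set.range fun k : ℕ => (f ^ k) v) = ⊤ := by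
  obtain ⟨v, hv⟩ := exists_forall_aeval_apply_eq_zero_iff f
  refine ⟨v, Submodule.eq_top_of_finrank_eq (le_antisymm (Submodule.finrank_le _) ?_)⟩
  rwa [finrank_span_range_pow_apply_eq f hv]

theorem minpoly_eq_charpoly_of_finrank_le (h : finrank K V ≤ (minpoly K f).natDegree) :
    minpoly K f = f.charpoly :=
  (eq_of_monic_of_dvd_of_natDegree_le (minpoly.monic (Algebra.IsIntegral.isIntegral f))
    f.charpoly_monic (LinearMap.minpoly_dvd_charpoly f) (f.charpoly_natDegree ▸ h)).symm

theorem dvd_minpoly_of_dvd_charpoly {q : K[X]} (hq : Irreducible q) (hqf : q ∣ f.charpoly) :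
    q ∣ minpoly K f := by
  have := Fact.mk hq
  set fE := f.baseChange (AdjoinRoot q)
  have hroot : fE.charpoly.IsRoot (AdjoinRoot.root q) := by
    rw [LinearMap.charpoly_baseChange, IsRoot, eval_map_algebraMap, AdjoinRoot.aeval_eq,
      AdjoinRoot.mk_eq_zero]
    exact hqf
  obtain ⟨w, hw⟩ := ((hasEigenvalue_iff_isRoot_charpoly fE _).mpr hroot).exists_hasEigenvector
  have hμw := aeval_apply_of_hasEigenvector hw (p := (minpoly K f).map (algebraMap K _))
  rw [LinearMap.aeval_baseChange_map, minpoly.aeval, LinearMap.baseChange_zero,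
    LinearMap.zero_apply, eq_comm, smul_eq_zero] at hμw
  rw [← AdjoinRoot.mk_eq_zero, ← AdjoinRoot.aeval_eq, ← eval_map_algebraMap]
  exact hμw.resolve_right hw.2

theorem minpoly_eq_charpoly_of_squarefree (h : Squarefree f.charpoly) :
    minpoly K f = f.charpoly := by
  refine minpoly_eq_charpoly_of_finrank_le f (f.charpoly_natDegree ▸ natDegree_le_of_dvd ?_
    (minpoly.ne_zero (Algebra.IsIntegral.isIntegral f)))
  exact h.dvd_of_forall_prime_dvd fun q hq hqf => dvd_minpoly_of_dvd_charpoly f hq.irreducible hqf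

end Module.End

theorem LinearMap.charpoly_dvd_of_span_range_pow_apply_eq_top {R K M : Type*} [CommRing R]
    [IsDomain R] [IsIntegrallyClosed R] [Field K] [Algebra R K] [IsFractionRing R K]
    [AddCommGroup M] [Module R M] [Module.Free R M] [Module.Finite R M] (f : Module.End R M)
    {v : K ⊗[R] M} (hv : Submodule.span K (Set.range fun k : ℕ => (f.baseChange K ^ k) v) = ⊤)
    {g : R[X]} (hg : g.Monic) (hfg : aeval f g = 0) : f.charpoly ∣ g := by
  rw [← hg.dvd_iff_fraction_map_dvd_fraction_map (K := K) f.charpoly_monic,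
    ← charpoly_baseChange, ← Module.End.minpoly_eq_charpoly_of_finrank_le _
      (Module.End.finrank_le_natDegree_minpoly _ hv)]
  refine minpoly.dvd K _ ?_
  rw [aeval_baseChange_map, hfg, baseChange_zero]

theorem stmt_1_general (G : Type*) [CommGroup G] [Fintype G] (n : ℕ) (hn : Fintype.card G = n)
    (σ : G) (hσ : ∀ g : G, g ∈ Subgroup.zpowers σ)
    (p : ℕ) [Fact p.Prime] (hp : ¬ p ∣ n)
    (M : Type*) [AddCommGroup M] [Module.Free ℤ M] [Module.Finite ℤ M]
    [DistribMulAction G M]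
    (hfin : ∃ m : M,
      (Submodule.span ℤ (Set.range fun g : G => g • m)).toAddSubgroup.index ≠ 0) :
    IsCyclicGroupRingModule (ZMod p) G M := by
  set T := DistribMulAction.toModuleEnd ℤ M σ
  have orbit (A : Type) [CommRing A] (x : A ⊗[ℤ] M) :
      Set.range (fun g : G => (DistribMulAction.toModuleEnd ℤ M g).baseChange A x) =
        Set.range fun k : ℕ => (T.baseChange A ^ k) x := by
    simp_rw [← Set.range_comp_pow_eq_range hσ, map_pow, LinearMap.baseChange_pow]
    rfl
  obtain ⟨m, hm⟩ := hfin
  have hcyc : Submodule.span ℚ (Set.range fun k : ℕ => (T.baseChange ℚ ^ k) (1 ⊗ₜ m)) = ⊤ := by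
    rw [← orbit, ← Submodule.baseChange_eq_top_of_index_ne_zero _ hm, Submodule.baseChange_span,
      ← Set.range_comp]
    rfl
  have hn0 : n ≠ 0 := by rintro rfl; exact hp (dvd_zero p)
  have hTn : aeval T (X ^ n - C 1 : ℤ[X]) = 0 := by
    rw [map_sub, map_pow, aeval_X, aeval_C, map_one, ← map_pow, ← hn, pow_card_eq_one, map_one,
      sub_self]
  have hdvd := T.charpoly_dvd_of_span_range_pow_apply_eq_top hcyc (monic_X_pow_sub_C 1 hn0) hTn
  have hsq : Squarefree (T.baseChange (ZMod p)).charpoly := by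
    have hsep : (X ^ n - C 1 : (ZMod p)[X]).Separable :=
      separable_X_pow_sub_C 1 ((ZMod.natCast_eq_zero_iff n p).not.mpr hp) one_ne_zero
    refine hsep.squarefree.squarefree_of_dvd ?_
    simpa [LinearMap.charpoly_baseChange] using map_dvd (algebraMap ℤ (ZMod p)) hdvd
  obtain ⟨v, hv⟩ := Module.End.exists_span_range_pow_apply_eq_top _ (by
    rw [Module.End.minpoly_eq_charpoly_of_squarefree _ hsq, LinearMap.charpoly_natDegree])
  refine ⟨v, ?_⟩
  rw [← hv, ← orbit]
  congr 1
  ext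
  exact exists_congr fun _ => eq_comm

/-- Let `G` be a finite cyclic group of order `n` generated by `σ`, `p` an odd prime with
`p ∤ n`, and `M` a free `ℤ`-module of finite rank with a `G`-action possessing an element `m`
with `[M : ℤ[G]·m] < ∞`.  Then `M/pM` (that is, `M ⊗ 𝔽_p`) is a cyclic `𝔽_p[G]`-module. -/
theorem stmt_1 (G : Type*) [CommGroup G] [Fintype G] (n : ℕ) (hn : Fintype.card G = n)
    (σ : G) (hσ : ∀ g : G, g ∈ Subgroup.zpowers σ)
    (p : ℕ) [Fact p.Prime] (hodd : p ≠ 2) (hp : ¬ p ∣ n)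
    (M : Type*) [AddCommGroup M] [Module.Free ℤ M] [Module.Finite ℤ M]
    [DistribMulAction G M]
    (hfin : ∃ m : M,
      (Submodule.span ℤ (Set.range fun g : G => g • m)).toAddSubgroup.index ≠ 0) :
    IsCyclicGroupRingModule (ZMod p) G M :=
  stmt_1_general G n hn σ hσ p hp M hfin
end

section
/- Let $\chi$ be a nontrivial Dirichlet character of conductor $f_\chi$, viewed as a character of $(\mathbb{Z}/f)^\times$ for some multiple $f$ of $f_\chi$, with values in $\mathbb{C}_p$. Then $\sum_{\substack{a=1 \\ (a,f)=1}}^{f} \log_p(1 - \zeta_f^a)\,\overline{\chi}(a) = \prod_{\ell \mid f}(1 - \overline{\chi}(\ell)) \cdot \sum_{a=1}^{f_\chi} \log_p(1 - \zeta_{f_\chi}^a)\,\overline{\chi}(a)$, where $\log_p$ is the Iwasawa $p$-adic logarithm and the product is over primes $\ell$ dividing $f$. -/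
/-!
Let `ψ = χ⁻¹` be realised by its primitive character of conductor `N`. The summand at `a` is
`ψ(a) lg(1 - ζ^a)` if `(a, f) = 1` and `0` otherwise, so inclusion–exclusion over the primes of `f`
turns the sum into `∑_t (-1)^|t| ψ(d_t) S(d_t)` with `d_t = ∏_{ℓ ∈ t} ℓ` and
`S(d) = ∑_{b < f/d} ψ(b) lg(1 - ζ^{db})`. If `ψ(d) ≠ 0` then `d` is prime to `N`, so `dN ∣ f`;
writing `b = c + N j`, the sum over `j` collapses by the distribution relation
`∏_{j < k} (1 - ω^j x) = 1 - x^k` for `ω = ζ^{dN}` of order `k = f / dN`, and `S(d)` is the sum at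
the conductor. Finally `∑_t (-1)^|t| ψ(d_t) = ∏_ℓ (1 - ψ(ℓ))`.
-/

open Finset

def IsLogarithm {M₀ A : Type*} [Mul M₀] [Zero M₀] [Add A] (lg : M₀ → A) : Prop :=
  ∀ x y : M₀, x ≠ 0 → y ≠ 0 → lg (x * y) = lg x + lg y

namespace IsLogarithm

variable {M₀ A : Type*} [CommMonoidWithZero M₀] [AddCancelCommMonoid A] {lg : M₀ → A}

theorem map_one (hlg : IsLogarithm lg) (h : (1 : M₀) ≠ 0) : lg 1 = 0 := by
  simpa using hlg 1 1 h h

theorem map_prod (hlg : IsLogarithm lg) {ι : Type*} {s : Finset ι} {g : ι → M₀}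
    (hs : ∏ i ∈ s, g i ≠ 0) : lg (∏ i ∈ s, g i) = ∑ i ∈ s, lg (g i) := by
  classical
  induction s using Finset.cons_induction with
  | empty => simpa using hlg.map_one (by simpa using hs)
  | cons a s _ ih =>
    rw [prod_cons] at hs
    rw [prod_cons, sum_cons, hlg _ _ (left_ne_zero_of_mul hs) (right_ne_zero_of_mul hs),
      ih (right_ne_zero_of_mul hs)]

end IsLogarithm

theorem IsPrimitiveRoot.prod_one_sub_pow_mul {R : Type*} [CommRing R] [IsDomain R] {η : R}
    {k : ℕ} (hη : IsPrimitiveRoot η k) (hk : 0 < k) (x : R) :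
    ∏ j ∈ range k, (1 - η ^ j * x) = 1 - x ^ k := by
  simpa [Polynomial.eval_prod] using
    congrArg (Polynomial.eval 1) (X_pow_sub_C_eq_prod hη hk rfl).symm

theorem IsLogarithm.sum_one_sub_pow_mul {R A : Type*} [CommRing R] [IsDomain R]
    [AddCancelCommMonoid A] {lg : R → A} (hlg : IsLogarithm lg) {η : R} {k : ℕ}
    (hη : IsPrimitiveRoot η k) {x : R} (hx : x ^ k ≠ 1) :
    ∑ j ∈ range k, lg (1 - η ^ j * x) = lg (1 - x ^ k) := by
  have hk : 0 < k := Nat.pos_of_ne_zero fun hk => hx (by rw [hk, pow_zero])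
  have hprod : ∏ j ∈ range k, (1 - η ^ j * x) ≠ 0 := by
    rw [hη.prod_one_sub_pow_mul hk]
    exact sub_ne_zero.mpr hx.symm
  rw [← hη.prod_one_sub_pow_mul hk, hlg.map_prod hprod]

theorem Finset.sum_range_mul_eq_sum_sum {M : Type*} [AddCommMonoid M] (F : ℕ → M) (m k : ℕ) :
    ∑ b ∈ range (m * k), F b = ∑ c ∈ range m, ∑ j ∈ range k, F (c + m * j) := by
  rw [mul_comm, ← Fin.sum_univ_eq_sum_range, ← finProdFinEquiv.sum_comp, Fintype.sum_prod_type,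
    Finset.sum_comm, ← Fin.sum_univ_eq_sum_range]
  refine Fintype.sum_congr _ _ fun c => ?_
  rw [← Fin.sum_univ_eq_sum_range]
  rfl

theorem Nat.sum_range_filter_dvd {M : Type*} [AddCommMonoid M] (F : ℕ → M) {d n : ℕ}
    (hd : d ∣ n) : ∑ a ∈ range n with d ∣ a, F a = ∑ b ∈ range (n / d), F (d * b) := by
  obtain ⟨m, rfl⟩ := hd
  rcases Nat.eq_zero_or_pos d with rfl | hd
  · simp
  rw [Nat.mul_div_cancel_left m hd,
    ← sum_image fun _ _ _ _ h => Nat.eq_of_mul_eq_mul_left hd h]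
  congr 1
  ext a
  simp only [mem_filter, mem_range, mem_image]
  constructor
  · rintro ⟨ha, b, rfl⟩
    exact ⟨b, Nat.lt_of_mul_lt_mul_left ha, rfl⟩
  · rintro ⟨b, hb, rfl⟩
    exact ⟨Nat.mul_lt_mul_of_pos_left hb hd, dvd_mul_right d b⟩

theorem ZMod.sum_eq_sum_range {M : Type*} [AddCommMonoid M] (n : ℕ) [NeZero n]
    (F : ZMod n → ℕ → M) : ∑ a : ZMod n, F a a.val = ∑ i ∈ range n, F i i := by
  refine sum_nbij' ZMod.val (fun i => i) (fun a _ => mem_range.mpr a.val_lt)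
    (fun _ _ => mem_univ _) (fun a _ => ZMod.natCast_zmod_val a)
    (fun i hi => ZMod.val_cast_of_lt (mem_range.mp hi)) fun a _ => ?_
  rw [ZMod.natCast_zmod_val]

theorem Nat.prod_dvd_of_subset_primeFactors {n : ℕ} {t : Finset ℕ} (ht : t ⊆ n.primeFactors) :
    ∏ p ∈ t, p ∣ n :=
  (prod_dvd_prod_of_subset _ _ _ ht).trans (prod_primeFactors_dvd n)

theorem Nat.sum_powerset_primeFactors_filter_dvd {a n : ℕ} (hn : n ≠ 0) :
    ∑ t ∈ n.primeFactors.powerset with ∏ p ∈ t, p ∣ a, (-1 : ℤ) ^ #t =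
      if a.Coprime n then 1 else 0 := by
  have hfilter : {t ∈ n.primeFactors.powerset | ∏ p ∈ t, p ∣ a} =
      {p ∈ n.primeFactors | p ∣ a}.powerset := by
    ext t
    simp only [mem_filter, mem_powerset, subset_iff]
    constructor
    · rintro ⟨ht, hdvd⟩ p hp
      exact ⟨ht hp, (dvd_prod_of_mem _ hp).trans hdvd⟩
    · intro ht
      exact ⟨fun p hp => (ht hp).1, prod_primes_dvd a
        (fun p hp => (Nat.prime_of_mem_primeFactors (ht hp).1).prime) fun p hp => (ht hp).2⟩
  have hempty : {p ∈ n.primeFactors | p ∣ a} = ∅ ↔ a.Coprime n := by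
    rw [filter_eq_empty_iff]
    constructor
    · exact fun h => Nat.coprime_of_dvd fun p hp hpa hpn =>
        h (Nat.mem_primeFactors.mpr ⟨hp, hpn, hn⟩) hpa
    · exact fun h p hp hpa => (Nat.prime_of_mem_primeFactors hp).one_lt.ne'
        (Nat.Coprime.eq_one_of_dvd (Nat.Coprime.coprime_dvd_left hpa h)
          (Nat.dvd_of_mem_primeFactors hp))
  rw [hfilter, sum_powerset_neg_one_pow_card]
  exact if_congr hempty rfl rfl

theorem Nat.sum_range_coprime_eq_sum_powerset {M : Type*} [AddCommGroup M] (n : ℕ)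
    (F : ℕ → M) :
    ∑ a ∈ range n with a.Coprime n, F a =
      ∑ t ∈ n.primeFactors.powerset,
        (-1 : ℤ) ^ #t • ∑ b ∈ range (n / ∏ p ∈ t, p), F ((∏ p ∈ t, p) * b) := by
  rcases eq_or_ne n 0 with rfl | hn
  · simp
  calc ∑ a ∈ range n with a.Coprime n, F a
      = ∑ a ∈ range n, ∑ t ∈ n.primeFactors.powerset with ∏ p ∈ t, p ∣ a,
          (-1 : ℤ) ^ #t • F a := by
        rw [sum_filter]
        refine sum_congr rfl fun a _ => ?_
        rw [← sum_smul, sum_powerset_primeFactors_filter_dvd hn]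
        split_ifs <;> simp
    _ = ∑ t ∈ n.primeFactors.powerset,
          (-1 : ℤ) ^ #t • ∑ a ∈ range n with ∏ p ∈ t, p ∣ a, F a := by
        simp_rw [sum_filter, smul_sum, smul_ite, smul_zero]
        exact sum_comm
    _ = _ := by
        refine sum_congr rfl fun t ht => ?_
        rw [sum_range_filter_dvd F (prod_dvd_of_subset_primeFactors (mem_powerset.mp ht))]

namespace DirichletCharacter

theorem changeLevel_natCast {R : Type*} [CommMonoidWithZero R] {m n : ℕ}
    (ψ : DirichletCharacter R m) (h : m ∣ n) (a : ℕ) :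
    changeLevel h ψ a = if a.Coprime n then ψ a else 0 := by
  split_ifs with ha
  · simpa using changeLevel_eq_cast_of_dvd' ψ h (a := a) (Nat.isCoprime_iff_coprime.mpr ha)
  · exact MulChar.map_nonunit _ fun hu => ha ((ZMod.isUnit_iff_coprime a n).mp hu)

variable {K : Type*} [Field K] {N n : ℕ} (ψ : DirichletCharacter K N) {ζ : K} {lg : K → K}

theorem sum_mul_log_one_sub_pow_of_mul_dvd (hN : N ≠ 1) (hlg : IsLogarithm lg)
    (hζ : IsPrimitiveRoot ζ n) (hn : n ≠ 0) {d : ℕ} (hd : d * N ∣ n) :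
    ∑ b ∈ range (n / d), ψ b * lg (1 - ζ ^ (d * b)) =
      ∑ c ∈ range N, ψ c * lg (1 - ζ ^ (n / N * c)) := by
  obtain ⟨k, rfl⟩ := hd
  obtain ⟨⟨hd0, hN0⟩, hk0⟩ := mul_ne_zero_iff.mp hn |>.imp_left mul_ne_zero_iff.mp
  have hω : IsPrimitiveRoot (ζ ^ (d * N)) k := by
    simpa [hd0, hN0] using hζ.pow_of_dvd (mul_ne_zero hd0 hN0) (dvd_mul_right _ k)
  rw [Nat.div_eq_of_eq_mul_left (Nat.pos_of_ne_zero hd0) (by ring : d * N * k = N * k * d),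
    Nat.div_eq_of_eq_mul_left (Nat.pos_of_ne_zero hN0) (by ring : d * N * k = d * k * N),
    sum_range_mul_eq_sum_sum]
  refine sum_congr rfl fun c _ => ?_
  simp only [Nat.cast_add, Nat.cast_mul, ZMod.natCast_self, zero_mul, add_zero, ← mul_sum]
  rcases eq_or_ne (ψ c) 0 with hc | hc
  · simp [hc]
  -- `ψ 0 = 0` as `N ≠ 1`, so `N ∤ c`: this keeps every argument of `lg` nonzero.
  have hx : (ζ ^ (d * c)) ^ k ≠ 1 := by
    rw [← pow_mul, Ne, hζ.pow_eq_one_iff_dvd,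
      Nat.mul_dvd_mul_iff_right (Nat.pos_of_ne_zero hk0),
      Nat.mul_dvd_mul_iff_left (Nat.pos_of_ne_zero hd0), ← ZMod.natCast_eq_zero_iff]
    have : Nontrivial (ZMod N) := ZMod.nontrivial_iff.mpr hN
    exact fun h => hc (by rw [h, MulChar.map_zero])
  calc ψ c * ∑ j ∈ range k, lg (1 - ζ ^ (d * (c + N * j)))
      = ψ c * ∑ j ∈ range k, lg (1 - (ζ ^ (d * N)) ^ j * ζ ^ (d * c)) := by
        simp only [← pow_mul, ← pow_add]
        ring_nf
    _ = ψ c * lg (1 - ζ ^ (d * k * c)) := by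
        rw [hlg.sum_one_sub_pow_mul hω hx, ← pow_mul]
        ring_nf

theorem sum_mul_log_one_sub_pow_of_dvd (hN : N ≠ 1) (hNn : N ∣ n) (hlg : IsLogarithm lg)
    (hζ : IsPrimitiveRoot ζ n) (hn : n ≠ 0) {d : ℕ} (hd : d ∣ n) :
    ∑ b ∈ range (n / d), ψ ↑(d * b) * lg (1 - ζ ^ (d * b)) =
      ψ d * ∑ c ∈ range N, ψ c * lg (1 - ζ ^ (n / N * c)) := by
  simp_rw [Nat.cast_mul, map_mul, mul_assoc, ← mul_sum]
  rcases eq_or_ne (ψ d) 0 with h | h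
  · simp [h]
  have hcop : d.Coprime N := by
    contrapose! h
    exact MulChar.map_nonunit _ (mt (ZMod.isUnit_iff_coprime d N).mp h)
  rw [sum_mul_log_one_sub_pow_of_mul_dvd ψ hN hlg hζ hn (hcop.mul_dvd_of_dvd_of_dvd hd hNn)]

end DirichletCharacter

theorem stmt_16_general (K : Type*) [Field K]
    (f : ℕ) [NeZero f]
    (χ : DirichletCharacter K f) (hχ : χ ≠ 1) [NeZero χ.conductor]
    (ζ : K) (hζ : IsPrimitiveRoot ζ f)
    (lg : K → K) (hlg : ∀ x y : K, x ≠ 0 → y ≠ 0 → lg (x * y) = lg x + lg y) :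
    ∑ a : ZMod f, (χ⁻¹ a) * lg (1 - ζ ^ a.val)
      = (∏ ℓ ∈ f.primeFactors, (1 - (χ.primitiveCharacter)⁻¹ (ℓ : ZMod χ.conductor))) *
        ∑ a : ZMod χ.conductor,
          ((χ.primitiveCharacter)⁻¹ a) * lg (1 - ζ ^ (f / χ.conductor * a.val)) := by
  set ψ := χ.primitiveCharacter⁻¹
  have hχψ : χ⁻¹ = DirichletCharacter.changeLevel χ.conductor_dvd_level ψ := by
    rw [map_inv, DirichletCharacter.changeLevel_primitiveCharacter]
  have hf₀ : χ.conductor ≠ 1 := mt χ.eq_one_iff_conductor_eq_one.mpr hχ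
  have euler : ∏ ℓ ∈ f.primeFactors, (1 - ψ ℓ) =
      ∑ t ∈ f.primeFactors.powerset, (-1 : ℤ) ^ #t • ψ ↑(∏ p ∈ t, p) := by
    simp_rw [sub_eq_add_neg, prod_one_add, prod_neg, Nat.cast_prod, map_prod, zsmul_eq_mul]
    push_cast
    rfl
  rw [ZMod.sum_eq_sum_range f (fun a i => χ⁻¹ a * lg (1 - ζ ^ i)),
    ZMod.sum_eq_sum_range χ.conductor (fun a i => ψ a * lg (1 - ζ ^ (f / χ.conductor * i))),
    euler, sum_mul]
  calc ∑ i ∈ range f, χ⁻¹ i * lg (1 - ζ ^ i)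
      = ∑ a ∈ range f with a.Coprime f, ψ a * lg (1 - ζ ^ a) := by
        simp only [hχψ, DirichletCharacter.changeLevel_natCast, ite_mul, zero_mul, sum_filter]
    _ = _ := by
        rw [Nat.sum_range_coprime_eq_sum_powerset]
        refine sum_congr rfl fun t ht => ?_
        rw [ψ.sum_mul_log_one_sub_pow_of_dvd hf₀ χ.conductor_dvd_level hlg hζ (NeZero.ne f)
          (Nat.prod_dvd_of_subset_primeFactors (mem_powerset.mp ht)), smul_mul_assoc]

/-- Conductor-lowering identity for twisted sums of `p`-adic logarithms of cyclotomic numbers: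
for a nontrivial Dirichlet character `χ` mod `f` of conductor `f₀`, and any "logarithm"
`lg` (a homomorphism from nonzero elements, modelling the Iwasawa `log_p`),
`∑_{(a,f)=1} lg(1-ζ_f^a) χ̄(a) = ∏_{ℓ ∣ f} (1 - χ̄₀(ℓ)) · ∑_a lg(1-ζ_{f₀}^a) χ̄₀(a)`,
where `χ̄ = χ⁻¹` (complex conjugation on root-of-unity values) and `χ̄₀` is the primitive
character attached to `χ`. -/
theorem stmt_16 (K : Type*) [Field K] [CharZero K]
    (f : ℕ) [NeZero f] (hf : 1 < f)
    (χ : DirichletCharacter K f) (hχ : χ ≠ 1) [NeZero χ.conductor]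
    (ζ : K) (hζ : IsPrimitiveRoot ζ f)
    (lg : K → K) (hlg : ∀ x y : K, x ≠ 0 → y ≠ 0 → lg (x * y) = lg x + lg y) :
    ∑ a : ZMod f, (χ⁻¹ a) * lg (1 - ζ ^ a.val)
      = (∏ ℓ ∈ f.primeFactors, (1 - (χ.primitiveCharacter)⁻¹ (ℓ : ZMod χ.conductor))) *
        ∑ a : ZMod χ.conductor,
          ((χ.primitiveCharacter)⁻¹ a) * lg (1 - ζ ^ (f / χ.conductor * a.val)) :=
  stmt_16_general K f χ hχ ζ hζ lg hlg
end
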